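/- arXiv:2505.04919 — 6 statements merged into one kernel-verified Lean document; each statement's English description precedes it below -/
import Mathlib

section
/- If f : C → D is an option-preserving surjection between optiongraphs, then f maps the set F_C of positions of C with no infinite play onto F_D, the set I_C of positions with no terminal subposition onto I_D, and the set M_C of remaining positions onto M_D. -/
def OptPres {α β : Type} (OptC : α → Set α) (OptD : β → Set β) (f : α → β) : Prop :=
  ∀ p, OptD (f p) = f '' OptC p

def cls {α : Type} (θ : α → α → Prop) (p : α) : Set α := {x | θ p x}

def clsSet {α : Type} (θ : α → α → Prop) (S : Set α) : Set (Set α) := cls θ '' S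

def IsCong {α : Type} (Opt : α → Set α) (θ : α → α → Prop) : Prop :=
  Equivalence θ ∧ ∀ p q, θ p q → clsSet θ (Opt p) = clsSet θ (Opt q)

noncomputable def quotOpt {α : Type} (Opt : α → Set α) (θ : α → α → Prop) :
    Quot θ → Set (Quot θ) := fun c => Quot.mk θ '' Opt c.out

def bowtie {α : Type} (Opt : α → Set α) : α → α → Prop :=
  fun p q => ∃ θ, IsCong Opt θ ∧ θ p q

def subOpt {α : Type} (Opt : α → Set α) (C : Set α) : ↥C → Set ↥C :=
  fun p => {q | (q : α) ∈ Opt (p : α)}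

def IsSubOG {α : Type} (Opt : α → Set α) (C : Set α) : Prop :=
  ∀ p ∈ C, Opt p ⊆ C

def Reaches {α : Type} (Opt : α → Set α) : α → α → Prop :=
  Relation.ReflTransGen (fun a b => b ∈ Opt a)

def Fset {α : Type} (Opt : α → Set α) : Set α :=
  {p | ¬ ∃ g : ℕ → α, g 0 = p ∧ ∀ n, g (n + 1) ∈ Opt (g n)}

def Iset {α : Type} (Opt : α → Set α) : Set α :=
  {p | ¬ ∃ t, Reaches Opt p t ∧ Opt t = ∅}

def Mset {α : Type} (Opt : α → Set α) : Set α :=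
  Set.univ \ (Fset Opt ∪ Iset Opt)


lemma reach_fwd {α β : Type} {OptC : α → Set α} {OptD : β → Set β} {f : α → β}
    (hf : OptPres OptC OptD f) {p t : α} (h : Reaches OptC p t) :
    Reaches OptD (f p) (f t) := by
  induction h with
  | refl => exact Relation.ReflTransGen.refl
  | tail _ hb ih => exact ih.tail (by rw [hf]; exact ⟨_, hb, rfl⟩)

lemma reach_lift {α β : Type} {OptC : α → Set α} {OptD : β → Set β} {f : α → β}
    (hf : OptPres OptC OptD f) {q u : β} (h : Relation.ReflTransGen (fun a b => b ∈ OptD a) q u) :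
    ∀ p : α, f p = q → ∃ t, Reaches OptC p t ∧ f t = u := by
  induction h using Relation.ReflTransGen.head_induction_on with
  | refl => exact fun p hp => ⟨p, Relation.ReflTransGen.refl, hp⟩
  | head hab _ ih =>
    intro p hp
    rw [← hp, hf] at hab
    obtain ⟨a', ha', hfa'⟩ := hab
    obtain ⟨t, ht, hft⟩ := ih a' hfa'
    exact ⟨t, Relation.ReflTransGen.head ha' ht, hft⟩

lemma inf_lift {α β : Type} {OptC : α → Set α} {OptD : β → Set β} {f : α → β}
    (hf : OptPres OptC OptD f) {p : α} {g : ℕ → β} (h0 : g 0 = f p)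
    (hs : ∀ n, g (n + 1) ∈ OptD (g n)) :
    ∃ h : ℕ → α, h 0 = p ∧ ∀ n, h (n + 1) ∈ OptC (h n) := by
  have key : ∀ n (a : α), f a = g n → ∃ b, b ∈ OptC a ∧ f b = g (n + 1) := by
    intro n a ha
    have := hs n
    rw [← ha, hf] at this
    obtain ⟨b, hb, hfb⟩ := this
    exact ⟨b, hb, hfb⟩
  choose F hF1 hF2 using key
  let H : ∀ n : ℕ, {a : α // f a = g n} :=
    fun n => Nat.rec ⟨p, h0.symm⟩ (fun n a => ⟨F n a.1 a.2, hF2 n a.1 a.2⟩) n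
  exact ⟨fun n => (H n).1, rfl, fun n => hF1 n (H n).1 (H n).2⟩

lemma Fset_pre {α β : Type} {OptC : α → Set α} {OptD : β → Set β} {f : α → β}
    (hf : OptPres OptC OptD f) : Fset OptC = f ⁻¹' Fset OptD := by
  ext p
  simp only [Fset, Set.mem_setOf_eq, Set.mem_preimage]
  constructor
  · intro hp ⟨g, hg0, hgs⟩
    obtain ⟨h, hh0, hhs⟩ := inf_lift hf (p := p) (by rw [hg0]) hgs
    exact hp ⟨h, hh0, hhs⟩
  · intro hp ⟨h, hh0, hhs⟩
    exact hp ⟨f ∘ h, by simp [hh0], fun n => by rw [Function.comp, Function.comp, hf]; exact ⟨_, hhs n, rfl⟩⟩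

lemma Iset_pre {α β : Type} {OptC : α → Set α} {OptD : β → Set β} {f : α → β}
    (hf : OptPres OptC OptD f) : Iset OptC = f ⁻¹' Iset OptD := by
  ext p
  simp only [Iset, Set.mem_setOf_eq, Set.mem_preimage]
  constructor
  · intro hp ⟨u, hru, hu⟩
    obtain ⟨t, hrt, hft⟩ := reach_lift hf hru p rfl
    refine hp ⟨t, hrt, ?_⟩
    have : OptD (f t) = f '' OptC t := hf t
    rw [hft, hu] at this
    exact Set.image_eq_empty.mp this.symm
  · intro hp ⟨t, hrt, ht⟩
    exact hp ⟨f t, reach_fwd hf hrt, by rw [hf, ht, Set.image_empty]⟩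

theorem stmt0 {α β : Type} [Nonempty α] [Nonempty β]
    (OptC : α → Set α) (OptD : β → Set β) (f : α → β)
    (hf : OptPres OptC OptD f) (hsurj : Function.Surjective f) :
    f '' Fset OptC = Fset OptD ∧ f '' Iset OptC = Iset OptD ∧
      f '' Mset OptC = Mset OptD := by
  have hF := Fset_pre hf
  have hI := Iset_pre hf
  have hM : Mset OptC = f ⁻¹' Mset OptD := by
    ext p
    simp [Mset, hF.ge, Set.ext_iff.mp hF p, Set.ext_iff.mp hI p]
  refine ⟨?_, ?_, ?_⟩ <;>
    simp [hF, hI, hM, Set.image_preimage_eq _ hsurj]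
end

section
/- The transitive closure of the union of two congruence relations on an optiongraph is again a congruence relation. -/
theorem stmt2 {α : Type} [Nonempty α] (Opt : α → Set α)
    (φ ψ : α → α → Prop) (hφ : IsCong Opt φ) (hψ : IsCong Opt ψ) :
    IsCong Opt (Relation.TransGen (fun a b => φ a b ∨ ψ a b)) := by
  obtain ⟨eφ, cφ⟩ := hφ
  obtain ⟨eψ, cψ⟩ := hψ
  set θ := Relation.TransGen (fun a b => φ a b ∨ ψ a b) with hθ
  have heq : Equivalence θ := by
    constructor
    · intro a; exact Relation.TransGen.single (Or.inl (eφ.refl a))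
    · intro a b h
      induction h with
      | single h => exact Relation.TransGen.single (h.imp eφ.symm eψ.symm)
      | tail _ h' ih => exact Relation.TransGen.head (h'.imp eφ.symm eψ.symm) ih
    · intro a b c h1 h2; exact h1.trans h2
  refine ⟨heq, ?_⟩
  have key : ∀ p q, (φ p q ∨ ψ p q) → clsSet θ (Opt p) = clsSet θ (Opt q) := by
    have gen : ∀ (σ : α → α → Prop), Equivalence σ →
        (∀ a b, σ a b → θ a b) →
        ∀ p q, clsSet σ (Opt p) = clsSet σ (Opt q) →
        clsSet θ (Opt p) = clsSet θ (Opt q) := by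
      intro σ eσ hle p q hpq
      have sub : ∀ A B : Set α, clsSet σ A = clsSet σ B → clsSet θ A ⊆ clsSet θ B := by
        intro A B hAB s hs
        obtain ⟨x, hx, rfl⟩ := hs
        have hxB : cls σ x ∈ clsSet σ B := hAB ▸ ⟨x, hx, rfl⟩
        obtain ⟨y, hy, hxy⟩ := hxB
        refine ⟨y, hy, ?_⟩
        have hσ : σ y x := by
          have : x ∈ cls σ y := hxy ▸ eσ.refl x
          exact this
        have hθyx : θ y x := hle _ _ hσ
        ext z
        exact ⟨fun hz => heq.trans (heq.symm hθyx) hz, fun hz => heq.trans hθyx hz⟩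
      exact Set.Subset.antisymm (sub _ _ hpq) (sub _ _ hpq.symm)
    intro p q h
    cases h with
    | inl h => exact gen φ eφ (fun a b hab => Relation.TransGen.single (Or.inl hab)) p q (cφ p q h)
    | inr h => exact gen ψ eψ (fun a b hab => Relation.TransGen.single (Or.inr hab)) p q (cψ p q h)
  intro p q h
  induction h with
  | single h => exact key _ _ h
  | tail _ h' ih => exact ih.trans (key _ _ h')
end

section
/- The union of all congruence relations on an optiongraph D is itself a congruence relation on D (hence it is the maximum congruence relation ⋈). -/
lemma cls_eq_of_rel {α : Type} {θ : α → α → Prop} (hθ : Equivalence θ) {x y : α}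
    (h : θ x y) : cls θ x = cls θ y := by
  ext z
  exact ⟨fun hz => hθ.trans (hθ.symm h) hz, fun hz => hθ.trans h hz⟩

lemma eq_cong {α : Type} (Opt : α → Set α) : IsCong Opt (· = ·) :=
  ⟨eq_equivalence, fun p q h => by rw [h]⟩

lemma transfer {α : Type} {Opt : α → Set α} {θ' θ : α → α → Prop}
    (hc : IsCong Opt θ') (hθ : Equivalence θ) (hle : ∀ a b, θ' a b → θ a b)
    {p q : α} (h : θ' p q) : clsSet θ (Opt p) = clsSet θ (Opt q) := by
  have key : ∀ u v : α, clsSet θ' (Opt u) = clsSet θ' (Opt v) →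
      clsSet θ (Opt u) ⊆ clsSet θ (Opt v) := by
    intro u v huv s hs
    obtain ⟨x, hx, rfl⟩ := hs
    have : cls θ' x ∈ clsSet θ' (Opt v) := by
      rw [← huv]; exact ⟨x, hx, rfl⟩
    obtain ⟨y, hy, hyx⟩ := this
    have hxy : θ' y x := by
      have : x ∈ cls θ' y := by rw [hyx]; exact hc.1.refl x
      exact this
    exact ⟨y, hy, cls_eq_of_rel hθ (hle _ _ hxy)⟩
  have h1 := hc.2 p q h
  exact Set.Subset.antisymm (key p q h1) (key q p h1.symm)

lemma join_cong {α : Type} {Opt : α → Set α} {θ₁ θ₂ : α → α → Prop}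
    (h₁ : IsCong Opt θ₁) (h₂ : IsCong Opt θ₂) :
    IsCong Opt (Relation.EqvGen (fun a b => θ₁ a b ∨ θ₂ a b)) := by
  have hE := Relation.EqvGen.is_equivalence (fun a b => θ₁ a b ∨ θ₂ a b)
  refine ⟨hE, fun p q h => ?_⟩
  induction h with
  | rel a b hab =>
      rcases hab with hab | hab
      · exact transfer h₁ hE (fun a b h => Relation.EqvGen.rel a b (Or.inl h)) hab
      · exact transfer h₂ hE (fun a b h => Relation.EqvGen.rel a b (Or.inr h)) hab
  | refl a => rfl
  | symm a b _ ih => exact ih.symm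
  | trans a b c _ _ ih₁ ih₂ => exact ih₁.trans ih₂

theorem stmt3 {α : Type} [Nonempty α] (Opt : α → Set α) :
    IsCong Opt (bowtie Opt) := by
  have hE : Equivalence (bowtie Opt) := by
    constructor
    · exact fun x => ⟨_, eq_cong Opt, rfl⟩
    · rintro x y ⟨θ, hθ, hxy⟩
      exact ⟨θ, hθ, hθ.1.symm hxy⟩
    · rintro x y z ⟨θ₁, h₁, hxy⟩ ⟨θ₂, h₂, hyz⟩
      exact ⟨_, join_cong h₁ h₂,
        (Relation.EqvGen.rel x y (Or.inl hxy)).trans _ _ _ (Relation.EqvGen.rel y z (Or.inr hyz))⟩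
  refine ⟨hE, fun p q h => ?_⟩
  obtain ⟨θ, hc, hpq⟩ := h
  exact transfer hc hE (fun a b hab => ⟨θ, hc, hab⟩) hpq
end

section
/- (Second Isomorphism Theorem) If C ≤ D and θ is a congruence on D, then C̃ = {[p]_θ ∈ D/θ | [p]_θ ∩ C ≠ ∅} is a suboptiongraph of D/θ that is isomorphic to the quotient C/(θ|_C). -/
section Aux

variable {α : Type} {θ : α → α → Prop}

lemma mk_eq_iff (h : Equivalence θ) {a b : α} :
    Quot.mk θ a = Quot.mk θ b ↔ θ a b := by
  rw [Quot.eq, h.eqvGen_iff]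

lemma cls_eq_iff (h : Equivalence θ) {a b : α} :
    cls θ a = cls θ b ↔ θ a b := by
  constructor
  · intro he
    exact (he ▸ h.refl b : b ∈ cls θ a)
  · intro hab
    ext x
    exact ⟨fun hx => h.trans (h.symm hab) hx, fun hx => h.trans hab hx⟩

lemma mk_image_eq {Opt : α → Set α} (hθ : IsCong Opt θ) {p q : α} (h : θ p q) :
    Quot.mk θ '' Opt p = Quot.mk θ '' Opt q := by
  obtain ⟨he, hc⟩ := hθ
  have hcs := hc p q h
  have key : ∀ a b : α, clsSet θ (Opt a) = clsSet θ (Opt b) →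
      Quot.mk θ '' Opt a ⊆ Quot.mk θ '' Opt b := by
    rintro a b hab x ⟨c, hc', rfl⟩
    have : cls θ c ∈ clsSet θ (Opt b) := hab ▸ ⟨c, hc', rfl⟩
    obtain ⟨d, hd, hdc⟩ := this
    exact ⟨d, hd, (mk_eq_iff he).mpr ((cls_eq_iff he).mp hdc)⟩
  exact Set.Subset.antisymm (key p q hcs) (key q p hcs.symm)

lemma quotOpt_mk {Opt : α → Set α} (hθ : IsCong Opt θ) (p : α) :
    quotOpt Opt θ (Quot.mk θ p) = Quot.mk θ '' Opt p :=
  mk_image_eq hθ ((mk_eq_iff hθ.1).mp (Quot.out_eq (Quot.mk θ p)))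

lemma optPres_symm {β : Type} {OC : α → Set α} {OD : β → Set β} (e : α ≃ β)
    (h : OptPres OC OD e) : OptPres OD OC e.symm := by
  intro q
  have h2 := h (e.symm q)
  rw [e.apply_symm_apply] at h2
  rw [h2, Equiv.symm_image_image]

end Aux


def stmt8F {α : Type} (θ : α → α → Prop) (C : Set α) :
    Quot (fun p q : ↥C => θ p q) → ↥(Quot.mk θ '' C) :=
  Quot.lift (fun p : ↥C => (⟨Quot.mk θ p, ⟨p, p.2, rfl⟩⟩ : ↥(Quot.mk θ '' C)))
    (fun _ _ h => Subtype.ext (Quot.sound h))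

lemma stmt8F_mk {α : Type} (θ : α → α → Prop) (C : Set α) (a : ↥C) :
    (stmt8F θ C (Quot.mk _ a) : Quot θ) = Quot.mk θ (a : α) := rfl

theorem stmt8 {α : Type} [Nonempty α] (Opt : α → Set α) (C : Set α)
    (hC : IsSubOG Opt C) (θ : α → α → Prop) (hθ : IsCong Opt θ) :
    IsSubOG (quotOpt Opt θ) (Quot.mk θ '' C) ∧
    ∃ e : Quot (fun p q : ↥C => θ p q) ≃ ↥(Quot.mk θ '' C),
      OptPres (quotOpt (subOpt Opt C) (fun p q : ↥C => θ p q))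
        (subOpt (quotOpt Opt θ) (Quot.mk θ '' C)) e ∧
      OptPres (subOpt (quotOpt Opt θ) (Quot.mk θ '' C))
        (quotOpt (subOpt Opt C) (fun p q : ↥C => θ p q)) e.symm := by
  obtain ⟨he, hcong⟩ := hθ
  set θ' : ↥C → ↥C → Prop := fun p q => θ p q with hθ'def
  have he' : Equivalence θ' :=
    ⟨fun p => he.refl p, fun h => he.symm h, fun h1 h2 => he.trans h1 h2⟩
  -- θ' is a congruence for subOpt Opt C
  have hcong' : IsCong (subOpt Opt C) θ' := by
    refine ⟨he', fun p q hpq => ?_⟩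
    have hcs := hcong p q hpq
    have key : ∀ a b : ↥C, clsSet θ (Opt (a : α)) = clsSet θ (Opt (b : α)) →
        clsSet θ' (subOpt Opt C a) ⊆ clsSet θ' (subOpt Opt C b) := by
      rintro a b hab x ⟨c, hc', rfl⟩
      have : cls θ (c : α) ∈ clsSet θ (Opt (b : α)) := hab ▸ ⟨c, hc', rfl⟩
      obtain ⟨d, hd, hdc⟩ := this
      have hdC : d ∈ C := hC b b.2 hd
      have hθdc : θ' ⟨d, hdC⟩ c := (cls_eq_iff he).mp hdc
      refine ⟨⟨d, hdC⟩, hd, ?_⟩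
      exact (cls_eq_iff he').mpr hθdc
    exact Set.Subset.antisymm (key p q hcs) (key q p hcs.symm)
  constructor
  · -- IsSubOG part
    rintro x ⟨p, hp, rfl⟩ y hy
    rw [quotOpt_mk ⟨he, hcong⟩] at hy
    obtain ⟨a, ha, rfl⟩ := hy
    exact ⟨a, hC p hp ha, rfl⟩
  · -- the isomorphism
    have hbij : Function.Bijective (stmt8F θ C) := by
      constructor
      · intro a b hab
        induction a using Quot.ind with | _ a =>
        induction b using Quot.ind with | _ b =>
        have h2 : Quot.mk θ (a : α) = Quot.mk θ (b : α) := by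
          rw [← stmt8F_mk θ C a, ← stmt8F_mk θ C b, hab]
        exact Quot.sound ((mk_eq_iff he).mp h2)
      · rintro ⟨x, p, hp, rfl⟩
        exact ⟨Quot.mk _ ⟨p, hp⟩, rfl⟩
    have hfor : OptPres (quotOpt (subOpt Opt C) θ')
        (subOpt (quotOpt Opt θ) (Quot.mk θ '' C)) (Equiv.ofBijective (stmt8F θ C) hbij) := ?_
    · exact ⟨Equiv.ofBijective (stmt8F θ C) hbij, hfor, optPres_symm _ hfor⟩
    intro c
    induction c using Quot.ind with | _ p =>
    have hec : ((Equiv.ofBijective (stmt8F θ C) hbij) (Quot.mk θ' p) : Quot θ)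
        = Quot.mk θ (p : α) := stmt8F_mk θ C p
    ext q
    simp only [subOpt, Set.mem_setOf_eq, hec]
    rw [quotOpt_mk ⟨he, hcong⟩, quotOpt_mk hcong']
    constructor
    · intro hq
      obtain ⟨a, ha, hqa⟩ := hq
      have haC : a ∈ C := hC p p.2 ha
      refine ⟨Quot.mk θ' ⟨a, haC⟩, ⟨⟨a, haC⟩, ha, rfl⟩, ?_⟩
      exact Subtype.ext ((stmt8F_mk θ C ⟨a, haC⟩).trans hqa)
    · rintro ⟨c, ⟨r, hr, rfl⟩, rfl⟩
      have hr2 : ((Equiv.ofBijective (stmt8F θ C) hbij) (Quot.mk θ' r) : Quot θ)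
          = Quot.mk θ (r : α) := stmt8F_mk θ C r
      rw [hr2]
      exact ⟨r, hr, rfl⟩
end

section
/- (Fourth Isomorphism Theorem) If θ is a congruence on an optiongraph D, then the map α(φ) = φ/θ is an order isomorphism (lattice isomorphism) from the interval [θ, ⋈] = {φ ∈ Con(D) | θ ⊆ φ} onto Con(D/θ). -/
def quotRel {α : Type} (θ φ : α → α → Prop) :
    Quot θ → Quot θ → Prop :=
  fun x y => ∃ a b, φ a b ∧ Quot.mk θ a = x ∧ Quot.mk θ b = y

namespace Stmt12Aux

variable {α : Type} {Opt : α → Set α} {θ : α → α → Prop}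

lemma mk_eq_iff (h : Equivalence θ) {a b : α} :
    Quot.mk θ a = Quot.mk θ b ↔ θ a b :=
  Quot.eq.trans (Equivalence.eqvGen_iff h)

lemma image_mk_subset (h : Equivalence θ) {S T : Set α}
    (hST : clsSet θ S ⊆ clsSet θ T) :
    Quot.mk θ '' S ⊆ Quot.mk θ '' T := by
  rintro x ⟨a, ha, rfl⟩
  obtain ⟨b, hb, hcls⟩ := hST ⟨a, ha, rfl⟩
  have hba : θ b a := by
    have : a ∈ cls θ b := by rw [hcls]; exact h.refl a
    exact this
  exact ⟨b, hb, Quot.sound hba⟩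

lemma image_mk_eq (h : Equivalence θ) {S T : Set α}
    (hST : clsSet θ S = clsSet θ T) :
    Quot.mk θ '' S = Quot.mk θ '' T :=
  le_antisymm (image_mk_subset h hST.le) (image_mk_subset h hST.ge)

lemma quotOpt_mk (hθ : IsCong Opt θ) (p : α) :
    quotOpt Opt θ (Quot.mk θ p) = Quot.mk θ '' Opt p := by
  have hout : θ (Quot.mk θ p).out p := (mk_eq_iff hθ.1).mp (Quot.out_eq _)
  exact image_mk_eq hθ.1 (hθ.2 _ _ hout)

lemma cls_quotRel (hθ : Equivalence θ) {φ : α → α → Prop} (hφ : Equivalence φ)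
    (hsub : ∀ a b, θ a b → φ a b) (a : α) :
    cls (quotRel θ φ) (Quot.mk θ a) = Quot.mk θ '' cls φ a := by
  ext x
  constructor
  · rintro ⟨a', b, hab, ha', rfl⟩
    have h1 : θ a' a := (mk_eq_iff hθ).mp ha'
    exact ⟨b, hφ.trans (hφ.symm (hsub a' a h1)) hab, rfl⟩
  · rintro ⟨b, hb, rfl⟩
    exact ⟨a, b, hb, rfl, rfl⟩

lemma clsSet_quotRel (hθ : Equivalence θ) {φ : α → α → Prop} (hφ : Equivalence φ)
    (hsub : ∀ a b, θ a b → φ a b) (S : Set α) :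
    clsSet (quotRel θ φ) (Quot.mk θ '' S) = Set.image (Quot.mk θ) '' clsSet φ S := by
  unfold clsSet
  rw [Set.image_image, Set.image_image]
  exact Set.image_congr fun a _ => cls_quotRel hθ hφ hsub a

lemma clsSet_pull (ψ : Quot θ → Quot θ → Prop) (S : Set α) :
    clsSet (fun a b => ψ (Quot.mk θ a) (Quot.mk θ b)) S
      = Set.preimage (Quot.mk θ) '' clsSet ψ (Quot.mk θ '' S) := by
  unfold clsSet
  rw [Set.image_image, Set.image_image]
  rfl

lemma isCong_quotRel (hθ : IsCong Opt θ) {φ : α → α → Prop}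
    (hφ : IsCong Opt φ) (hsub : ∀ a b, θ a b → φ a b) :
    IsCong (quotOpt Opt θ) (quotRel θ φ) := by
  constructor
  · constructor
    · intro x
      obtain ⟨a, rfl⟩ := Quot.exists_rep x
      exact ⟨a, a, hφ.1.refl a, rfl, rfl⟩
    · rintro x y ⟨a, b, hab, rfl, rfl⟩
      exact ⟨b, a, hφ.1.symm hab, rfl, rfl⟩
    · rintro x y z ⟨a, b, hab, rfl, rfl⟩ ⟨b', c, hbc, hb', rfl⟩
      have h1 : θ b' b := (mk_eq_iff hθ.1).mp hb'
      exact ⟨a, c, hφ.1.trans hab (hφ.1.trans (hφ.1.symm (hsub _ _ h1)) hbc), rfl, rfl⟩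
  · rintro x y ⟨a, b, hab, rfl, rfl⟩
    rw [quotOpt_mk hθ, quotOpt_mk hθ, clsSet_quotRel hθ.1 hφ.1 hsub,
      clsSet_quotRel hθ.1 hφ.1 hsub, hφ.2 a b hab]

lemma isCong_pull (hθ : IsCong Opt θ) {ψ : Quot θ → Quot θ → Prop}
    (hψ : IsCong (quotOpt Opt θ) ψ) :
    IsCong Opt (fun a b => ψ (Quot.mk θ a) (Quot.mk θ b)) := by
  constructor
  · exact ⟨fun a => hψ.1.refl _, fun h => hψ.1.symm h, fun h h' => hψ.1.trans h h'⟩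
  · intro p q hpq
    have h := hψ.2 _ _ hpq
    rw [quotOpt_mk hθ, quotOpt_mk hθ] at h
    rw [clsSet_pull, clsSet_pull, h]

lemma pull_quotRel (hθ : IsCong Opt θ) {φ : α → α → Prop}
    (hφ : Equivalence φ) (hsub : ∀ a b, θ a b → φ a b) :
    (fun a b => quotRel θ φ (Quot.mk θ a) (Quot.mk θ b)) = φ := by
  funext a b
  apply propext
  constructor
  · rintro ⟨a', b', hab, ha, hb⟩
    have h1 : θ a' a := (mk_eq_iff hθ.1).mp ha
    have h2 : θ b' b := (mk_eq_iff hθ.1).mp hb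
    exact hφ.trans (hφ.symm (hsub _ _ h1)) (hφ.trans hab (hsub _ _ h2))
  · intro h
    exact ⟨a, b, h, rfl, rfl⟩

lemma quotRel_pull (ψ : Quot θ → Quot θ → Prop) :
    quotRel θ (fun a b => ψ (Quot.mk θ a) (Quot.mk θ b)) = ψ := by
  funext x y
  apply propext
  constructor
  · rintro ⟨a, b, h, rfl, rfl⟩
    exact h
  · intro h
    obtain ⟨a, rfl⟩ := Quot.exists_rep x
    obtain ⟨b, rfl⟩ := Quot.exists_rep y
    exact ⟨a, b, h, rfl, rfl⟩

end Stmt12Aux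

theorem stmt12 {α : Type} [Nonempty α] (Opt : α → Set α)
    (θ : α → α → Prop) (hθ : IsCong Opt θ) :
    ∃ e : {φ : α → α → Prop // IsCong Opt φ ∧ ∀ a b, θ a b → φ a b} ≃o
          {ψ : Quot θ → Quot θ → Prop // IsCong (quotOpt Opt θ) ψ},
      ∀ φ, (e φ : Quot θ → Quot θ → Prop) = quotRel θ φ.1 := by
  open Stmt12Aux in
  refine ⟨Equiv.toOrderIso
    ⟨fun φ => ⟨quotRel θ φ.1, isCong_quotRel hθ φ.2.1 φ.2.2⟩,
     fun ψ => ⟨fun a b => ψ.1 (Quot.mk θ a) (Quot.mk θ b), isCong_pull hθ ψ.2,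
       fun a b h => by show ψ.1 (Quot.mk θ a) (Quot.mk θ b); rw [Quot.sound h]; exact ψ.2.1.refl _⟩,
     fun φ => Subtype.ext (pull_quotRel hθ φ.2.1.1 φ.2.2),
     fun ψ => Subtype.ext (quotRel_pull ψ.1)⟩
    ?_ ?_, fun φ => rfl⟩
  · rintro φ φ' h x y ⟨a, b, hab, ha, hb⟩
    exact ⟨a, b, h a b hab, ha, hb⟩
  · rintro ψ ψ' h a b hab
    exact h _ _ hab
end

section
/- If p is a position of an optiongraph D with no terminal subposition, then the ⋈-equivalence class of p is exactly the set I of all positions with no terminal subposition. -/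
-- auxiliary lemmas

lemma Iset_opt_ne {α : Type} {Opt : α → Set α} {a : α} (ha : a ∈ Iset Opt) :
    Opt a ≠ ∅ := by
  intro h
  exact ha ⟨a, Relation.ReflTransGen.refl, h⟩

lemma Iset_closed {α : Type} {Opt : α → Set α} {a b : α} (ha : a ∈ Iset Opt)
    (hb : b ∈ Opt a) : b ∈ Iset Opt := by
  rintro ⟨t, ht, hOpt⟩
  exact ha ⟨t, Relation.ReflTransGen.head hb ht, hOpt⟩

def myθ {α : Type} (Opt : α → Set α) : α → α → Prop :=
  fun a b => (a ∈ Iset Opt ∧ b ∈ Iset Opt) ∨ a = b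

lemma myθ_cong {α : Type} (Opt : α → Set α) : IsCong Opt (myθ Opt) := by
  constructor
  · constructor
    · intro x; exact Or.inr rfl
    · rintro x y (⟨hx, hy⟩ | rfl)
      · exact Or.inl ⟨hy, hx⟩
      · exact Or.inr rfl
    · rintro x y z (⟨hx, hy⟩ | rfl) h
      · rcases h with ⟨hy', hz⟩ | rfl
        · exact Or.inl ⟨hx, hz⟩
        · exact Or.inl ⟨hx, hy⟩
      · exact h
  · rintro a b (⟨ha, hb⟩ | rfl)
    · have key : ∀ c : α, c ∈ Iset Opt → clsSet (myθ Opt) (Opt c) = {Iset Opt} := by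
        intro c hc
        have hne : (Opt c).Nonempty := Set.nonempty_iff_ne_empty.2 (Iset_opt_ne hc)
        apply Set.eq_singleton_iff_nonempty_unique_mem.2
        constructor
        · exact ⟨cls (myθ Opt) hne.choose, ⟨hne.choose, hne.choose_spec, rfl⟩⟩
        · rintro S ⟨y, hy, rfl⟩
          have hyI : y ∈ Iset Opt := Iset_closed hc hy
          ext z
          constructor
          · rintro (⟨_, hz⟩ | rfl) <;> [exact hz; exact hyI]
          · intro hz; exact Or.inl ⟨hyI, hz⟩
      rw [key a ha, key b hb]
    · rfl

lemma cls_eq_rel {α : Type} {θ : α → α → Prop} (hθ : Equivalence θ) {a b : α}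
    (h : cls θ a = cls θ b) : θ a b := by
  have : b ∈ cls θ b := hθ.refl b
  rw [← h] at this
  exact this

lemma bowtie_Iset {α : Type} (Opt : α → Set α) {θ : α → α → Prop}
    (hθ : IsCong Opt θ) {b t : α} (hbt : Reaches Opt b t) (ht : Opt t = ∅) :
    ∀ a, θ a b → a ∈ Iset Opt → False := by
  induction hbt using Relation.ReflTransGen.head_induction_on with
  | refl =>
    intro a hab ha
    have := hθ.2 a t hab
    rw [ht] at this
    have hne : (Opt a).Nonempty := Set.nonempty_iff_ne_empty.2 (Iset_opt_ne ha)
    have : clsSet θ (Opt a) = ∅ := by simpa [clsSet] using this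
    exact (Set.nonempty_iff_ne_empty.1 (hne.image _)) this
  | head hbc _ ih =>
    rename_i b c _
    intro a hab ha
    have hcls := hθ.2 a b hab
    have : cls θ c ∈ clsSet θ (Opt a) := by
      rw [hcls]; exact ⟨c, hbc, rfl⟩
    rcases this with ⟨a', ha', heq⟩
    exact ih a' (cls_eq_rel hθ.1 heq) (Iset_closed ha ha')

theorem stmt16 {α : Type} [Nonempty α] (Opt : α → Set α)
    (p : α) (hp : p ∈ Iset Opt) :
    cls (bowtie Opt) p = Iset Opt := by
  ext q
  constructor
  · rintro ⟨θ, hθ, hpq⟩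
    by_contra hq
    simp only [Iset, Set.mem_setOf_eq, not_not] at hq
    rcases hq with ⟨t, hqt, ht⟩
    exact bowtie_Iset Opt hθ hqt ht p hpq hp
  · intro hq
    exact ⟨myθ Opt, myθ_cong Opt, Or.inl ⟨hp, hq⟩⟩
end
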